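/- Let φ be a poor man's formula, written as a conjunction of conjuncts c₁ ∧ ⋯ ∧ c_t where each conjunct c_i is a literal, a formula □ψ, or a formula ◇ξ. Then φ is satisfiable with respect to F≥1 if and only if for every pair of (not necessarily distinct) indices i, j ∈ {1,…,t}, the conjunction c_i ∧ c_j is satisfiable with respect to F≥1. -/

import Mathlib

namespace PoorMansModal

/-- Modal formulas over propositional variables of type `α`: variables `p`,
negated variables `p̄`, general negation, conjunction, disjunction, box, diamond,
and the constants `true` and `false`. -/
inductive Fml (α : Type) : Type where
  | var : α → Fml α
  | nvar : α → Fml α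
  | neg : Fml α → Fml α
  | and : Fml α → Fml α → Fml α
  | or : Fml α → Fml α → Fml α
  | box : Fml α → Fml α
  | dia : Fml α → Fml α
  | tru : Fml α
  | fls : Fml α

/-- A Kripke model: a nonempty set of worlds, an accessibility relation, and a valuation. -/
structure Kripke (α : Type) where
  World : Type
  nonempty : Nonempty World
  R : World → World → Prop
  V : α → World → Prop

/-- Truth of a formula at a world of a model. -/
def Sat {α : Type} (M : Kripke α) : Fml α → M.World → Prop
  | .var p, w => M.V p w
  | .nvar p, w => ¬ M.V p w
  | .neg φ, w => ¬ Sat M φ w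
  | .and φ ψ, w => Sat M φ w ∧ Sat M ψ w
  | .or φ ψ, w => Sat M φ w ∨ Sat M ψ w
  | .box φ, w => ∀ v, M.R w v → Sat M φ v
  | .dia φ, w => ∃ v, M.R w v ∧ Sat M φ v
  | .tru, _ => True
  | .fls, _ => False

/-- Modal depth: depth of nesting of `□` and `◇`. -/
def mdep {α : Type} : Fml α → ℕ
  | .var _ => 0
  | .nvar _ => 0
  | .neg φ => mdep φ
  | .and φ ψ => max (mdep φ) (mdep ψ)
  | .or φ ψ => max (mdep φ) (mdep ψ)
  | .box φ => mdep φ + 1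
  | .dia φ => mdep φ + 1
  | .tru => 0
  | .fls => 0

/-- Conjunction of a list of formulas; the empty conjunction is the always-true formula. -/
def bigConj {α : Type} : List (Fml α) → Fml α
  | [] => .tru
  | [φ] => φ
  | φ :: rest => .and φ (bigConj rest)

/-- `□^k φ`. -/
def boxI {α : Type} : ℕ → Fml α → Fml α
  | 0, φ => φ
  | k + 1, φ => .box (boxI k φ)

/-- `◇^k φ`. -/
def diaI {α : Type} : ℕ → Fml α → Fml α
  | 0, φ => φ
  | k + 1, φ => .dia (diaI k φ)

/-- `(◇□)^k φ`. -/
def diaBoxI {α : Type} : ℕ → Fml α → Fml α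
  | 0, φ => φ
  | k + 1, φ => .dia (.box (diaBoxI k φ))

/-- The literal with variable `l.1` and sign `l.2` (`true` = positive). -/
def litF {α : Type} (l : α × Bool) : Fml α := if l.2 then .var l.1 else .nvar l.1

/-- The variable `p` occurs in the formula. -/
def occursV {α : Type} (p : α) : Fml α → Prop
  | .var q => p = q
  | .nvar q => p = q
  | .neg φ => occursV p φ
  | .and φ ψ => occursV p φ ∨ occursV p ψ
  | .or φ ψ => occursV p φ ∨ occursV p ψ
  | .box φ => occursV p φ
  | .dia φ => occursV p φ
  | .tru => False
  | .fls => False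

/-- Poor man's formulas: built from literals, `∧`, `□`, `◇` only. -/
def PoorF {α : Type} : Fml α → Prop
  | .var _ => True
  | .nvar _ => True
  | .and φ ψ => PoorF φ ∧ PoorF ψ
  | .box φ => PoorF φ
  | .dia φ => PoorF φ
  | _ => False

/-- Formulas of the language `L`: built from literals, `∧`, `∨`, `□`, `◇`. -/
def InL {α : Type} : Fml α → Prop
  | .var _ => True
  | .nvar _ => True
  | .and φ ψ => InL φ ∧ InL ψ
  | .or φ ψ => InL φ ∧ InL ψ
  | .box φ => InL φ
  | .dia φ => InL φ
  | _ => False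

/-- Every world has at most one successor. -/
def AtMostOne {W : Type} (R : W → W → Prop) : Prop :=
  ∀ w v v', R w v → R w v' → v = v'

/-- Every world has at least one successor. -/
def AtLeastOne {W : Type} (R : W → W → Prop) : Prop :=
  ∀ w, ∃ v, R w v

/-- Every world has at most two successors. -/
def AtMostTwo {W : Type} (R : W → W → Prop) : Prop :=
  ∀ w v₁ v₂ v₃, R w v₁ → R w v₂ → R w v₃ → v₁ = v₂ ∨ v₁ = v₃ ∨ v₂ = v₃

/-- `chainR R n w v`: there is an `R`-path of length exactly `n` from `w` to `v`. -/
def chainR {W : Type} (R : W → W → Prop) : ℕ → W → W → Prop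
  | 0, w, v => w = v
  | k + 1, w, v => ∃ u, R w u ∧ chainR R k u v

/-- `R` is the parent-child relation of a rooted tree with root `root`
in which every node has at most two children. -/
structure IsBinTree {W : Type} (R : W → W → Prop) (root : W) : Prop where
  reach : ∀ w, Relation.ReflTransGen R root w
  root_no_parent : ∀ w, ¬ R w root
  unique_parent : ∀ w v v', R v w → R v' w → v = v'
  acyclic : ∀ w, ¬ Relation.TransGen R w w
  at_most_two_children : ∀ w v₁ v₂ v₃, R w v₁ → R w v₂ → R w v₃ → v₁ = v₂ ∨ v₁ = v₃ ∨ v₂ = v₃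

/-- `φ_exp = ⋀_{i=1}^n □^{i-1}(◇□^{n-i} p_i ∧ ◇□^{n-i} p̄_i)`, with `p_i = var i`. -/
def phiExp (n : ℕ) : Fml ℕ :=
  bigConj ((List.range n).map (fun j =>
    boxI j (.and (.dia (boxI (n - 1 - j) (.var (j + 1))))
                 (.dia (boxI (n - 1 - j) (.nvar (j + 1)))))))

/-- Satisfiability with respect to the class of all frames. -/
def SatAll (φ : Fml ℕ) : Prop := ∃ (M : Kripke ℕ) (w : M.World), Sat M φ w

/-- Satisfiability with respect to `F≤1`. -/
def SatLe1 (φ : Fml ℕ) : Prop := ∃ M : Kripke ℕ, AtMostOne M.R ∧ ∃ w, Sat M φ w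

/-- Satisfiability with respect to `F≥1`. -/
def SatGe1 (φ : Fml ℕ) : Prop := ∃ M : Kripke ℕ, AtLeastOne M.R ∧ ∃ w, Sat M φ w

/-- Satisfiability with respect to `F≤2`. -/
def SatLe2 (φ : Fml ℕ) : Prop := ∃ M : Kripke ℕ, AtMostTwo M.R ∧ ∃ w, Sat M φ w

/-- A one-world model with no successors, realizing the boolean assignment `v`;
truth at its world is propositional truth for formulas without modal operators. -/
def propModel (v : ℕ → Bool) : Kripke ℕ :=
  { World := Unit, nonempty := ⟨()⟩, R := fun _ _ => False, V := fun p _ => v p = true }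

/-- Propositional satisfaction of `φ` under the assignment `v`. -/
def PropSat (v : ℕ → Bool) (φ : Fml ℕ) : Prop := Sat (propModel v) φ ()


/-- A conjunct of a (flattened) poor man's formula: a literal, a `□`-formula, or a
`◇`-formula (over poor man's formulas). -/
def IsConjunct : Fml ℕ → Prop
  | .var _ => True
  | .nvar _ => True
  | .box ψ => PoorF ψ
  | .dia ψ => PoorF ψ
  | _ => False

/-!
Induction on modal depth. If all pairs of conjuncts of `C` are `F≥1`-satisfiable, then so are all
pairs of every successor demand: the conjuncts under the `□`s of `C`, together with those under
at most one `◇` of `C`. By induction each demand has a serial model; a fresh root, valuated by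
the positive literals of `C` and pointing to the roots of these models, satisfies `C` (the pair
`p ∧ p̄` is unsatisfiable, so no negative literal of `C` is violated).
-/

section Conjuncts

variable {α : Type}

def conjuncts : Fml α → List (Fml α)
  | .and φ ψ => conjuncts φ ++ conjuncts ψ
  | φ => [φ]

theorem sat_conjuncts {M : Kripke α} {φ : Fml α} {w : M.World} :
    Sat M φ w ↔ ∀ d ∈ conjuncts φ, Sat M d w := by
  induction φ with
  | and φ ψ ihφ ihψ => simp only [Sat, conjuncts, List.mem_append, ihφ, ihψ]; grind
  | _ => simp [conjuncts]

theorem mdep_le_of_mem_conjuncts {φ d : Fml α} (hd : d ∈ conjuncts φ) : mdep d ≤ mdep φ := by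
  induction φ with
  | and φ ψ ihφ ihψ =>
    simp only [conjuncts, List.mem_append] at hd
    rcases hd with hd | hd
    · exact (ihφ hd).trans (le_max_left _ _)
    · exact (ihψ hd).trans (le_max_right _ _)
  | _ => simp_all [conjuncts]

theorem sat_bigConj {M : Kripke α} {C : List (Fml α)} {w : M.World} :
    Sat M (bigConj C) w ↔ ∀ c ∈ C, Sat M c w := by
  induction C using bigConj.induct <;> simp_all [bigConj, Sat]

end Conjuncts

theorem isConjunct_iff {c : Fml ℕ} :
    IsConjunct c ↔ (∃ p, c = .var p) ∨ (∃ p, c = .nvar p) ∨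
      (∃ ψ, c = .box ψ ∧ PoorF ψ) ∨ (∃ ξ, c = .dia ξ ∧ PoorF ξ) := by
  cases c <;> simp [IsConjunct]

theorem isConjunct_of_mem_conjuncts {φ d : Fml ℕ} (hφ : PoorF φ) (hd : d ∈ conjuncts φ) :
    IsConjunct d := by
  induction φ with
  | and φ ψ ihφ ihψ =>
    simp only [conjuncts, List.mem_append] at hd
    exact hd.elim (ihφ hφ.1) (ihψ hφ.2)
  | _ => simp_all [conjuncts, PoorF, IsConjunct]

section RootedSum

variable {α J : Type} (M : J → Kripke α) (w : ∀ j, (M j).World) (v : α → Prop)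

def rootedSum : Kripke α where
  World := Option (Σ j, (M j).World)
  nonempty := ⟨none⟩
  R a b := (a = none ∧ ∃ j, b = some ⟨j, w j⟩) ∨
    ∃ j x y, (M j).R x y ∧ a = some ⟨j, x⟩ ∧ b = some ⟨j, y⟩
  V p a := a.elim (v p) fun x => (M x.1).V p x.2

theorem rootedSum_R_none {b : (rootedSum M w v).World} :
    (rootedSum M w v).R none b ↔ ∃ j, b = some ⟨j, w j⟩ := by
  simp [rootedSum]

theorem rootedSum_R_some {j : J} {x : (M j).World} {b : (rootedSum M w v).World} :
    (rootedSum M w v).R (some ⟨j, x⟩) b ↔ ∃ y, (M j).R x y ∧ b = some ⟨j, y⟩ := by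
  simp only [rootedSum, reduceCtorEq, false_and, Option.some.injEq, false_or]
  constructor
  · rintro ⟨j', x', y, hxy, hx, rfl⟩
    obtain ⟨rfl, hx⟩ := Sigma.mk.inj_iff.mp hx
    obtain rfl := eq_of_heq hx
    exact ⟨y, hxy, rfl⟩
  · rintro ⟨y, hxy, rfl⟩
    exact ⟨j, x, y, hxy, rfl, rfl⟩

theorem sat_rootedSum_some (φ : Fml α) (j : J) (x : (M j).World) :
    Sat (rootedSum M w v) φ (some ⟨j, x⟩) ↔ Sat (M j) φ x := by
  induction φ generalizing x with
  | box ψ ih =>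
    refine ⟨fun h y hy => (ih y).mp (h _ ((rootedSum_R_some M w v).mpr ⟨y, hy, rfl⟩)), ?_⟩
    intro h b hb
    obtain ⟨y, hy, rfl⟩ := (rootedSum_R_some M w v).mp hb
    exact (ih y).mpr (h y hy)
  | dia ψ ih =>
    refine ⟨?_, fun ⟨y, hy, h⟩ => ⟨_, (rootedSum_R_some M w v).mpr ⟨y, hy, rfl⟩, (ih y).mpr h⟩⟩
    rintro ⟨b, hb, h⟩
    obtain ⟨y, hy, rfl⟩ := (rootedSum_R_some M w v).mp hb
    exact ⟨y, hy, (ih y).mp h⟩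
  | _ => simp_all [Sat, rootedSum]

theorem atLeastOne_rootedSum [Nonempty J] (hM : ∀ j, AtLeastOne (M j).R) :
    AtLeastOne (rootedSum M w v).R := by
  rintro (_ | ⟨j, x⟩)
  · exact ⟨some ⟨Classical.arbitrary J, _⟩, (rootedSum_R_none M w v).mpr ⟨_, rfl⟩⟩
  · obtain ⟨y, hy⟩ := hM j x
    exact ⟨some ⟨j, y⟩, (rootedSum_R_some M w v).mpr ⟨y, hy, rfl⟩⟩

end RootedSum

def PairwiseSatGe1 (C : List (Fml ℕ)) : Prop :=
  ∀ c ∈ C, ∀ c' ∈ C, SatGe1 (.and c c')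

theorem SatGe1.and_comm {a b : Fml ℕ} (h : SatGe1 (.and a b)) : SatGe1 (.and b a) := by
  obtain ⟨M, hM, w, ha, hb⟩ := h
  exact ⟨M, hM, w, hb, ha⟩

theorem SatGe1.of_box_box {ψ ψ' d d' : Fml ℕ} (h : SatGe1 (.and (.box ψ) (.box ψ')))
    (hd : d ∈ conjuncts ψ) (hd' : d' ∈ conjuncts ψ') : SatGe1 (.and d d') := by
  obtain ⟨M, hM, w, hψ, hψ'⟩ := h
  obtain ⟨v, hv⟩ := hM w
  exact ⟨M, hM, v, sat_conjuncts.mp (hψ v hv) d hd, sat_conjuncts.mp (hψ' v hv) d' hd'⟩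

theorem SatGe1.of_box_dia {ψ ξ d d' : Fml ℕ} (h : SatGe1 (.and (.box ψ) (.dia ξ)))
    (hd : d ∈ conjuncts ψ) (hd' : d' ∈ conjuncts ξ) : SatGe1 (.and d d') := by
  obtain ⟨M, hM, w, hψ, v, hv, hξ⟩ := h
  exact ⟨M, hM, v, sat_conjuncts.mp (hψ v hv) d hd, sat_conjuncts.mp hξ d' hd'⟩

theorem SatGe1.of_dia {ξ d d' : Fml ℕ} (h : SatGe1 (.dia ξ))
    (hd : d ∈ conjuncts ξ) (hd' : d' ∈ conjuncts ξ) : SatGe1 (.and d d') := by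
  obtain ⟨M, hM, w, v, hv, hξ⟩ := h
  exact ⟨M, hM, v, sat_conjuncts.mp hξ d hd, sat_conjuncts.mp hξ d' hd'⟩

/-- What a successor must satisfy: the conjuncts under every `□` of `C` and, for `o = some ξ`,
those under the `◇ξ` it witnesses. -/
def demand (C : List (Fml ℕ)) (o : Option (Fml ℕ)) : List (Fml ℕ) :=
  (C.flatMap fun c => match c with | .box ψ => conjuncts ψ | _ => []) ++
    o.toList.flatMap conjuncts

theorem mem_demand {C : List (Fml ℕ)} {o : Option (Fml ℕ)} {d : Fml ℕ} :
    d ∈ demand C o ↔ (∃ ψ, .box ψ ∈ C ∧ d ∈ conjuncts ψ) ∨ ∃ ξ ∈ o, d ∈ conjuncts ξ := by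
  simp only [demand, List.mem_append, List.mem_flatMap, Option.mem_toList]
  refine or_congr ⟨?_, fun ⟨ψ, hψ, hd⟩ => ⟨_, hψ, hd⟩⟩ Iff.rfl
  rintro ⟨c, hc, hd⟩
  cases c <;> first | exact ⟨_, hc, hd⟩ | simp at hd

theorem isConjunct_and_mdep_lt_of_mem_demand {C : List (Fml ℕ)} {n : ℕ}
    (hC : ∀ c ∈ C, IsConjunct c ∧ mdep c ≤ n) {o : Option (Fml ℕ)} (ho : ∀ ξ ∈ o, .dia ξ ∈ C)
    {d : Fml ℕ} (hd : d ∈ demand C o) : IsConjunct d ∧ mdep d < n := by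
  rcases mem_demand.mp hd with ⟨ψ, hψ, hd⟩ | ⟨ξ, hξ, hd⟩
  · obtain ⟨hψ, hn⟩ := hC _ hψ
    exact ⟨isConjunct_of_mem_conjuncts hψ hd, (mdep_le_of_mem_conjuncts hd).trans_lt hn⟩
  · obtain ⟨hξ, hn⟩ := hC _ (ho ξ hξ)
    exact ⟨isConjunct_of_mem_conjuncts hξ hd, (mdep_le_of_mem_conjuncts hd).trans_lt hn⟩

theorem PairwiseSatGe1.demand {C : List (Fml ℕ)} (hC : PairwiseSatGe1 C)
    {o : Option (Fml ℕ)} (ho : ∀ ξ ∈ o, .dia ξ ∈ C) : PairwiseSatGe1 (demand C o) := by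
  intro d hd d' hd'
  rcases mem_demand.mp hd with ⟨ψ, hψ, hd⟩ | ⟨ξ, hξ, hd⟩ <;>
    rcases mem_demand.mp hd' with ⟨ψ', hψ', hd'⟩ | ⟨ξ', hξ', hd'⟩
  · exact (hC _ hψ _ hψ').of_box_box hd hd'
  · exact (hC _ hψ _ (ho ξ' hξ')).of_box_dia hd hd'
  · exact ((hC _ hψ' _ (ho ξ hξ)).of_box_dia hd' hd).and_comm
  · obtain rfl := Option.mem_unique hξ hξ'
    obtain ⟨M, hM, w, hw, -⟩ := hC _ (ho ξ hξ) _ (ho ξ hξ)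
    exact SatGe1.of_dia ⟨M, hM, w, hw⟩ hd hd'

theorem exists_model_of_demand {C : List (Fml ℕ)} (hC : ∀ c ∈ C, IsConjunct c)
    (hpair : PairwiseSatGe1 C)
    (hdemand : ∀ o : {o : Option (Fml ℕ) // ∀ ξ ∈ o, .dia ξ ∈ C},
      ∃ M : Kripke ℕ, AtLeastOne M.R ∧ ∃ w, ∀ d ∈ demand C o, Sat M d w) :
    ∃ M : Kripke ℕ, AtLeastOne M.R ∧ ∃ w, ∀ c ∈ C, Sat M c w := by
  choose M hM w hw using hdemand
  have : Nonempty {o : Option (Fml ℕ) // ∀ ξ ∈ o, .dia ξ ∈ C} := ⟨⟨none, by simp⟩⟩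
  refine ⟨rootedSum M w (fun p => .var p ∈ C), atLeastOne_rootedSum M w _ hM, none, ?_⟩
  intro c hc
  obtain ⟨p, rfl⟩ | ⟨p, rfl⟩ | ⟨ψ, rfl, -⟩ | ⟨ξ, rfl, -⟩ := isConjunct_iff.mp (hC c hc)
  · exact hc
  · intro hp
    obtain ⟨_, _, _, hp, hnp⟩ := hpair _ hp _ hc
    exact hnp hp
  · intro b hb
    obtain ⟨o, rfl⟩ := (rootedSum_R_none M w _).mp hb
    refine (sat_rootedSum_some M w _ _ o _).mpr (sat_conjuncts.mpr fun d hd => hw o d ?_)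
    exact mem_demand.mpr (Or.inl ⟨ψ, hc, hd⟩)
  · let o : {o : Option (Fml ℕ) // ∀ ξ ∈ o, .dia ξ ∈ C} := ⟨some ξ, by simpa using hc⟩
    refine ⟨some ⟨o, w o⟩, (rootedSum_R_none M w _).mpr ⟨o, rfl⟩, ?_⟩
    refine (sat_rootedSum_some M w _ _ o _).mpr (sat_conjuncts.mpr fun d hd => hw o d ?_)
    exact mem_demand.mpr (Or.inr ⟨ξ, rfl, hd⟩)

theorem exists_model_of_pairwiseSatGe1 (n : ℕ) {C : List (Fml ℕ)}
    (hC : ∀ c ∈ C, IsConjunct c ∧ mdep c ≤ n) (hpair : PairwiseSatGe1 C) :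
    ∃ M : Kripke ℕ, AtLeastOne M.R ∧ ∃ w, ∀ c ∈ C, Sat M c w := by
  induction n generalizing C with
  | zero =>
    refine exists_model_of_demand (fun c hc => (hC c hc).1) hpair fun ⟨o, ho⟩ => ?_
    refine ⟨⟨Unit, ⟨()⟩, fun _ _ => True, fun _ _ => True⟩, fun _ => ⟨(), trivial⟩, (), ?_⟩
    exact fun d hd => absurd (isConjunct_and_mdep_lt_of_mem_demand hC ho hd).2 (Nat.not_lt_zero _)
  | succ n ih =>
    refine exists_model_of_demand (fun c hc => (hC c hc).1) hpair fun ⟨o, ho⟩ => ?_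
    refine ih (fun d hd => ?_) (hpair.demand ho)
    obtain ⟨hd, hn⟩ := isConjunct_and_mdep_lt_of_mem_demand hC ho hd
    exact ⟨hd, Nat.lt_succ_iff.mp hn⟩

/-- A poor man's formula `c₁ ∧ ⋯ ∧ c_t` is satisfiable with respect to `F≥1`
iff every pair (not necessarily distinct) of its conjuncts `c_i ∧ c_j` is satisfiable
with respect to `F≥1`. -/
theorem stmt7 (cs : List (Fml ℕ)) (hcs : ∀ c ∈ cs, IsConjunct c) :
    SatGe1 (bigConj cs) ↔ ∀ c ∈ cs, ∀ c' ∈ cs, SatGe1 (.and c c') := by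
  constructor
  · rintro ⟨M, hM, w, hw⟩ c hc c' hc'
    exact ⟨M, hM, w, sat_bigConj.mp hw c hc, sat_bigConj.mp hw c' hc'⟩
  · intro hpair
    obtain ⟨M, hM, w, hw⟩ := exists_model_of_pairwiseSatGe1 (cs.map mdep).sum
      (fun c hc => ⟨hcs c hc, List.le_sum_of_mem (List.mem_map_of_mem hc)⟩) hpair
    exact ⟨M, hM, w, sat_bigConj.mpr hw⟩

end PoorMansModal
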